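/- The one-dimensional Hausdorff measure of the interior nodal set of the Steklov eigenfunction u(z) = Im(z^m) on the open unit disk equals 2m. -/

import Mathlib

open Complex Metric MeasureTheory Set
open scoped ENNReal Real

/-!
Since `Im (z ^ m) = ‖z‖ ^ m * sin (m * arg z)`, the nodal set in the disk consists of `0` and the
`2m` open radii at the angles `k * π / m`, `-m < k ≤ m`. The radii are pairwise disjoint (they
have different arguments), each is an isometric copy of `(0, 1)`, and `{0}` is `μH[1]`-null.
-/

namespace Complex

theorem im_pow_eq_norm_pow_mul_sin (z : ℂ) (n : ℕ) :
    (z ^ n).im = ‖z‖ ^ n * Real.sin (n * arg z) := by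
  conv_lhs => rw [← norm_mul_cos_add_sin_mul_I z]
  rw [mul_pow, cos_add_sin_mul_I_pow, ← ofReal_pow, ← ofReal_natCast, ← ofReal_mul,
    ← ofReal_cos, ← ofReal_sin, im_ofReal_mul, add_im, ofReal_im, im_ofReal_mul, I_im, zero_add,
    mul_one]

theorem im_pow_eq_zero_iff_arg_eq {z : ℂ} (hz : z ≠ 0) {n : ℕ} (hn : 0 < n) :
    (z ^ n).im = 0 ↔ ∃ k ∈ Finset.Ioc (-n : ℤ) n, arg z = k * π / n := by
  have hn' : (0 : ℝ) < n := by exact_mod_cast hn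
  rw [im_pow_eq_norm_pow_mul_sin, mul_eq_zero,
    or_iff_right (pow_ne_zero _ (norm_ne_zero_iff.2 hz)), Real.sin_eq_zero_iff]
  constructor
  · rintro ⟨k, hk⟩
    have harg : arg z = k * π / n := by field_simp; linarith
    have hlow : -(n : ℝ) * π < k * π := by
      have := neg_pi_lt_arg z
      rw [harg, lt_div_iff₀ hn'] at this
      linarith
    have hup : (k : ℝ) * π ≤ n * π := by
      have := arg_le_pi z
      rw [harg, div_le_iff₀ hn'] at this
      linarith
    refine ⟨k, Finset.mem_Ioc.2 ⟨?_, ?_⟩, harg⟩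
    · exact_mod_cast (mul_lt_mul_iff_of_pos_right Real.pi_pos).1 hlow
    · exact_mod_cast (mul_le_mul_iff_of_pos_right Real.pi_pos).1 hup
  · rintro ⟨k, -, hk⟩
    exact ⟨k, by rw [hk]; field_simp⟩

theorem isometry_ofReal_mul {u : ℂ} (hu : ‖u‖ = 1) : Isometry fun r : ℝ => (r : ℂ) * u :=
  Isometry.of_dist_eq fun a b => by
    rw [dist_eq, ← sub_mul, norm_mul, hu, mul_one, ← ofReal_sub, norm_real, Real.dist_eq,
      Real.norm_eq_abs]

end Complex

def radialSegment (θ : ℝ) : Set ℂ := {z | z ≠ 0 ∧ ‖z‖ < 1 ∧ arg z = θ}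

theorem radialSegment_eq_image {θ : ℝ} (hθ : θ ∈ Ioc (-π) π) :
    radialSegment θ = (fun r : ℝ => (r : ℂ) * (cos θ + sin θ * I)) '' Ioo 0 1 := by
  ext z
  constructor
  · rintro ⟨hz, hz1, rfl⟩
    exact ⟨‖z‖, ⟨norm_pos_iff.2 hz, hz1⟩, norm_mul_cos_add_sin_mul_I z⟩
  · rintro ⟨r, ⟨hr0, hr1⟩, rfl⟩
    have hnorm : ‖(r : ℂ) * (cos θ + sin θ * I)‖ = r := by
      rw [norm_mul, norm_cos_add_sin_mul_I, mul_one, norm_real, Real.norm_of_nonneg hr0.le]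
    refine ⟨fun h => hr0.ne' (by simpa [h] using hnorm.symm), hnorm.symm ▸ hr1, ?_⟩
    rw [arg_real_mul _ hr0, arg_cos_add_sin_mul_I hθ]

theorem hausdorffMeasure_radialSegment {θ : ℝ} (hθ : θ ∈ Ioc (-π) π) :
    μH[1] (radialSegment θ) = 1 := by
  rw [radialSegment_eq_image hθ,
    (isometry_ofReal_mul (norm_cos_add_sin_mul_I θ)).hausdorffMeasure_image (Or.inl zero_le_one),
    hausdorffMeasure_real, Real.volume_Ioo, sub_zero, ENNReal.ofReal_one]

theorem measurableSet_radialSegment (θ : ℝ) : MeasurableSet (radialSegment θ) :=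
  (measurableSet_singleton 0).compl.inter <|
    (measurableSet_lt measurable_norm measurable_const).inter
      (measurableSet_eq_fun measurable_arg measurable_const)

theorem disjoint_radialSegment {θ₁ θ₂ : ℝ} (h : θ₁ ≠ θ₂) :
    Disjoint (radialSegment θ₁) (radialSegment θ₂) :=
  Set.disjoint_left.2 fun _ h₁ h₂ => h (h₁.2.2.symm.trans h₂.2.2)

theorem ball_inter_pow_im_eq_zero {m : ℕ} (hm : 0 < m) :
    {z : ℂ | z ∈ ball (0 : ℂ) 1 ∧ (z ^ m).im = 0} =
      insert 0 (⋃ k ∈ Finset.Ioc (-m : ℤ) m, radialSegment (k * π / m)) := by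
  ext z
  rcases eq_or_ne z 0 with rfl | hz
  · simp [hm.ne']
  simp only [mem_ofPred_eq, mem_ball, dist_zero_right, mem_insert_iff, hz, false_or, mem_iUnion,
    exists_prop, radialSegment, ne_eq, not_false_eq_true, true_and, im_pow_eq_zero_iff_arg_eq hz hm]
  exact ⟨fun ⟨hz1, k, hk, h⟩ => ⟨k, hk, hz1, h⟩, fun ⟨k, hk, hz1, h⟩ => ⟨hz1, k, hk, h⟩⟩

theorem int_mul_pi_div_mem_Ioc {n : ℕ} (hn : 0 < n) {k : ℤ} (hk : k ∈ Finset.Ioc (-n : ℤ) n) :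
    (k * π / n : ℝ) ∈ Ioc (-π) π := by
  have hn' : (0 : ℝ) < n := by exact_mod_cast hn
  obtain ⟨hk₁, hk₂⟩ := Finset.mem_Ioc.1 hk
  have hk₁' : -(n : ℝ) < k := by exact_mod_cast hk₁
  have hk₂' : (k : ℝ) ≤ n := by exact_mod_cast hk₂
  rw [mem_Ioc, lt_div_iff₀ hn', div_le_iff₀ hn']
  constructor <;> nlinarith [Real.pi_pos]

/-- The 1-dimensional Hausdorff measure of the interior nodal set of the Steklov
eigenfunction `u(z) = Im (z^m)` on the open unit disk equals `2m`. -/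
theorem stmt_3 (m : ℕ) (hm : 0 < m) :
    μH[1] {z : ℂ | z ∈ Metric.ball (0 : ℂ) 1 ∧ (z ^ m).im = 0} = (2 * m : ℝ≥0∞) := by
  have : NullSingletonClass (μH[1] : Measure ℂ) := Measure.nullSingletonClass_hausdorff ℂ one_pos
  have hm' : (m : ℝ) ≠ 0 := by exact_mod_cast hm.ne'
  have hinj : Set.InjOn (fun k : ℤ => (k * π / m : ℝ)) (Finset.Ioc (-m : ℤ) m) :=
    fun j _ k _ hjk => by
      exact_mod_cast mul_left_injective₀ Real.pi_ne_zero ((div_left_inj' hm').1 hjk)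
  rw [ball_inter_pow_im_eq_zero hm, measure_congr (insert_ae_eq_self _ _),
    measure_biUnion_finset (fun j hj k hk hjk => disjoint_radialSegment (hinj.ne hj hk hjk))
      (fun k _ => measurableSet_radialSegment _),
    Finset.sum_congr rfl fun k hk =>
      hausdorffMeasure_radialSegment (int_mul_pi_div_mem_Ioc hm hk),
    Finset.sum_const, Int.card_Ioc, show ((m : ℤ) - -m).toNat = 2 * m by omega]
  simp
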